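/- arXiv:1307.5284 — 7 statements merged into one kernel-verified Lean document; each statement's English description precedes it below -/
import Mathlib

section
/- For u in the Hardy space L^2_+(S^1), the shifted Hankel operator K_u = T_z^* H_u satisfies K_u^2 = H_u^2 - (·|u)u, i.e., for every h in L^2_+, K_u^2(h) = H_u^2(h) - (h|u)u. -/
open scoped BigOperators

/-- Fourier-coefficient model of the Hankel operator `H_u(h) = Π(u ⬝ conj h)`
on the Hardy space `L²₊(S¹)`: `(H_u h)^(n) = ∑_{k ≥ 0} û(n+k) ⬝ conj(ĥ(k))`. -/
noncomputable def hankel (u h : ℕ → ℂ) : ℕ → ℂ :=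
  fun n => ∑' k : ℕ, u (n + k) * (starRingEnd ℂ) (h k)

/-- The shifted Hankel operator `K_u = T_z^* H_u`:
`(K_u h)^(n) = ∑_{k ≥ 0} û(n+k+1) ⬝ conj(ĥ(k))`. -/
noncomputable def shiftedHankel (u h : ℕ → ℂ) : ℕ → ℂ :=
  fun n => ∑' k : ℕ, u (n + k + 1) * (starRingEnd ℂ) (h k)

/-! The Fourier coefficients of `H_u² h` are `∑_j (∑_k u(n+k) conj u(k+j)) h(j)`, and since
`K_u = H_{T_z^* u}` those of `K_u² h` are given by the same formula with `u` shifted by one.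
The two inner kernels differ exactly by their `k = 0` term `u(n) conj u(j)`, the kernel of
`h ↦ (h|u) u`. The `H^{1/2}` weight `(n+1)‖u n‖²` is what makes the double series absolutely
summable, which justifies exchanging the order of summation. -/

open Finset ComplexConjugate

theorem summable_of_summable_succ_mul {f : ℕ → ℝ} (hf0 : 0 ≤ f)
    (hf : Summable fun n : ℕ => ((n : ℝ) + 1) * f n) : Summable f :=
  hf.of_nonneg_of_le hf0 fun n => le_mul_of_one_le_left (hf0 n) (by simp)

theorem summable_succ_mul_comp_succ {f : ℕ → ℝ} (hf0 : 0 ≤ f)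
    (hf : Summable fun n : ℕ => ((n : ℝ) + 1) * f n) :
    Summable fun n : ℕ => ((n : ℝ) + 1) * f (n + 1) := by
  refine ((summable_nat_add_iff 1).mpr hf).of_nonneg_of_le
    (fun n => mul_nonneg (by positivity) (hf0 _)) fun n => ?_
  push_cast
  exact mul_le_mul_of_nonneg_right (by linarith) (hf0 _)

theorem summable_prod_comp_add_of_summable_succ_mul {f : ℕ → ℝ} (hf0 : 0 ≤ f)
    (hf : Summable fun n : ℕ => ((n : ℝ) + 1) * f n) :
    Summable fun p : ℕ × ℕ => f (p.1 + p.2) := by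
  rw [← HasAntidiagonal.sigmaAntidiagonalEquivProd.summable_iff, Function.comp_def,
    summable_sigma_of_nonneg fun _ => hf0 _]
  refine ⟨fun n => .of_finite, hf.congr fun n => ?_⟩
  have hfiber : ∀ p : antidiagonal n, f (p.1.1 + p.1.2) = f n := fun p => by
    rw [mem_antidiagonal.mp p.2]
  simp [hfiber]

theorem summable_mul_of_summable_norm_sq {ι R : Type*} [NormedRing R] [CompleteSpace R]
    {a b : ι → R} (ha : Summable fun i => ‖a i‖ ^ 2) (hb : Summable fun i => ‖b i‖ ^ 2) :
    Summable fun i => a i * b i :=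
  .of_norm_bounded ((ha.add hb).div_const 2) fun i =>
    (norm_mul_le _ _).trans <| by nlinarith [two_mul_le_add_sq ‖a i‖ ‖b i‖]

section

variable {v h : ℕ → ℂ} (hv : Summable fun n : ℕ => ((n : ℝ) + 1) * ‖v n‖ ^ 2)
  (hh : Summable fun n : ℕ => ‖h n‖ ^ 2)
include hv hh

theorem summable_hankel_hankel_terms (n : ℕ) :
    Summable fun p : ℕ × ℕ => v (n + p.1) * (conj (v (p.1 + p.2)) * h p.2) := by
  have hv2 := summable_of_summable_succ_mul (fun _ => sq_nonneg _) hv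
  have hvn : Summable fun k => ‖v (n + k)‖ ^ 2 :=
    ((summable_nat_add_iff n).mpr hv2).congr fun k => by rw [add_comm]
  have hprod : Summable fun p : ℕ × ℕ => ‖v (n + p.1) * h p.2‖ ^ 2 :=
    (hvn.mul_of_nonneg hh (fun _ => sq_nonneg _) fun _ => sq_nonneg _).congr fun p => by
      rw [norm_mul, mul_pow]
  have hdiag : Summable fun p : ℕ × ℕ => ‖conj (v (p.1 + p.2))‖ ^ 2 := by
    simpa using summable_prod_comp_add_of_summable_succ_mul (fun _ => sq_nonneg _) hv
  exact (summable_mul_of_summable_norm_sq hprod hdiag).congr fun p => by ring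

theorem hasSum_hankel_hankel (n : ℕ) :
    HasSum (fun j => (∑' k, v (n + k) * conj (v (k + j))) * h j) (hankel v (hankel v h) n) := by
  have hF := summable_hankel_hankel_terms hv hh n
  have hswap : hankel v (hankel v h) n = ∑' j, ∑' k, v (n + k) * (conj (v (k + j)) * h j) := by
    rw [hF.tsum_comm (f := fun k j => v (n + k) * (conj (v (k + j)) * h j))]
    refine tsum_congr fun k => ?_
    rw [hankel, Complex.conj_tsum, ← tsum_mul_left]
    simp
  simp_rw [hswap, ← tsum_mul_right, mul_assoc]
  exact hF.prod_symm.prod.hasSum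

end

theorem shiftedHankel_eq_hankel_comp_succ (u : ℕ → ℂ) :
    hankel (fun m => u (m + 1)) = shiftedHankel u :=
  rfl

theorem tsum_mul_conj_eq_add_tsum_succ {u : ℕ → ℂ} (hu : Summable fun k => ‖u k‖ ^ 2)
    (n j : ℕ) :
    ∑' k, u (n + k) * conj (u (k + j))
      = u n * conj (u j) + ∑' k, u (n + k + 1) * conj (u (k + j + 1)) := by
  have hshift (m : ℕ) : Summable fun k => ‖u (k + m)‖ ^ 2 := (summable_nat_add_iff m).mpr hu
  have hsum : Summable fun k => u (n + k) * conj (u (k + j)) :=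
    summable_mul_of_summable_norm_sq ((hshift n).congr fun k => by rw [add_comm])
      (by simpa using hshift j)
  rw [hsum.tsum_eq_zero_add]
  simp only [add_zero, zero_add, ← add_assoc, add_right_comm _ 1 j]

/-- For `u` in (the Sobolev space `H^{1/2}` inside) the Hardy space `L²₊(S¹)`,
the shifted Hankel operator `K_u = T_z^* H_u` satisfies
`K_u² = H_u² - (·|u)u`, i.e. for every `h ∈ L²₊`,
`K_u²(h) = H_u²(h) - (h|u) u`. -/
theorem stmt0 (u h : ℕ → ℂ)
    (hu : Summable fun n : ℕ => ((n : ℝ) + 1) * ‖u n‖ ^ 2)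
    (hh : Summable fun n : ℕ => ‖h n‖ ^ 2) :
    ∀ n : ℕ, shiftedHankel u (shiftedHankel u h) n
      = hankel u (hankel u h) n - (∑' k : ℕ, h k * (starRingEnd ℂ) (u k)) * u n := by
  intro n
  have hu2 := summable_of_summable_succ_mul (fun _ => sq_nonneg _) hu
  have hH := hasSum_hankel_hankel hu hh n
  have hus : Summable fun m : ℕ => ((m : ℝ) + 1) * ‖u (m + 1)‖ ^ 2 :=
    summable_succ_mul_comp_succ (f := fun k => ‖u k‖ ^ 2) (fun _ => sq_nonneg _) hu
  have hK := hasSum_hankel_hankel hus hh n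
  rw [shiftedHankel_eq_hankel_comp_succ] at hK
  have hrank_one : HasSum (fun j => u n * conj (u j) * h j) (u n * ∑' k, h k * conj (u k)) := by
    have := (summable_mul_of_summable_norm_sq (b := fun j => conj (u j)) hh
      (by simpa using hu2)).hasSum.mul_left (u n)
    simpa only [mul_assoc, mul_comm (h _)] using this
  have hdiff := hH.sub hK
  simp_rw [← sub_mul, tsum_mul_conj_eq_add_tsum_succ hu2, add_sub_cancel_right] at hdiff
  linear_combination (hdiff.unique hrank_one).symm
end

section
/- For u sufficiently smooth (say u ∈ H^s_+ with s > 1), the Hankel operator of Π(|u|^2 u) satisfies the identity H_{Π(|u|^2 u)} = T_{|u|^2} H_u + H_u T_{|u|^2} - H_u^3. -/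
open scoped BigOperators

/-- Convolution of Fourier coefficient sequences on `ℤ` (Fourier coefficients of a product). -/
noncomputable def conv (a b : ℤ → ℂ) : ℤ → ℂ := fun n => ∑' k : ℤ, a k * b (n - k)

/-- Fourier coefficients of the complex conjugate: `(conj a)^(n) = conj(â(-n))`. -/
noncomputable def cstar (a : ℤ → ℂ) : ℤ → ℂ := fun n => (starRingEnd ℂ) (a (-n))

/-- The Szegő projector `Π` onto nonnegative frequencies. -/
noncomputable def szego (a : ℤ → ℂ) : ℤ → ℂ := fun n => if 0 ≤ n then a n else 0

/-- The Hankel operator `H_u(h) = Π(u ⬝ conj h)` in Fourier coefficients. -/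
noncomputable def hankelOp (u h : ℤ → ℂ) : ℤ → ℂ := szego (conv u (cstar h))

/-- The Toeplitz operator `T_b(h) = Π(b h)` in Fourier coefficients. -/
noncomputable def toeplitzOp (b h : ℤ → ℂ) : ℤ → ℂ := szego (conv b h)

/-!
Expanding every convolution, the `n`-th coefficient of each of the four operators applied to `h`
is the sum of `u_a ū_b u_c h̄_{a-b+c-n}` over a region of `ℤ³`: all of `ℤ³` for `H_{Π(|u|²u)}`,
the half-space `a - b ≤ n` for `T_{|u|²} H_u`, the half-space `n ≤ a` for `H_u T_{|u|²}`, and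
their intersection for `H_u³`. Outside the union of the two half-spaces `b < 0`, where `u`
vanishes, so the identity is inclusion–exclusion. The regularity of `u` (any `s > 1/2` suffices)
makes it absolutely summable and `h ∈ ℓ²` is bounded, so the triple sum converges absolutely and
all the rearrangements are legitimate.
-/

open scoped ComplexConjugate

-- Either `1 ≤ a * x`, and then `x ≤ a * x ^ 2`, or `x < a⁻¹`.
theorem le_inv_add_mul_sq {a x : ℝ} (ha : 0 < a) (hx : 0 ≤ x) : x ≤ a⁻¹ + a * x ^ 2 := by
  rcases le_or_gt 1 (a * x) with hax | hax
  · nlinarith [inv_pos.2 ha]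
  · have hx_eq : x = a⁻¹ * (a * x) := by field_simp
    nlinarith [inv_pos.2 ha, mul_nonneg ha.le (sq_nonneg x)]

theorem summable_one_add_sq_rpow_neg {s : ℝ} (hs : 1 / 2 < s) :
    Summable fun n : ℤ => (1 + (n : ℝ) ^ 2) ^ (-s) := by
  refine (Real.summable_abs_int_rpow (b := 2 * s) (by linarith)).of_norm_bounded_eventually ?_
  filter_upwards [Filter.eventually_cofinite_ne 0] with n hn
  have hn' : 0 < |(n : ℝ)| := by positivity
  rw [Real.norm_of_nonneg (by positivity), show -(2 * s) = 2 * -s by ring,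
    Real.rpow_mul hn'.le, Real.rpow_two, sq_abs]
  exact Real.rpow_le_rpow_of_nonpos ((pow_pos hn' 2).trans_eq (sq_abs _)) (by linarith)
    (by linarith)

theorem summable_norm_of_summable_one_add_sq_rpow_mul_sq {E : Type*} [SeminormedAddCommGroup E]
    {s : ℝ} (hs : 1 / 2 < s) {u : ℤ → E}
    (hu : Summable fun n : ℤ => (1 + (n : ℝ) ^ 2) ^ s * ‖u n‖ ^ 2) :
    Summable fun n => ‖u n‖ := by
  refine ((summable_one_add_sq_rpow_neg hs).add hu).of_nonneg_of_le (fun n => norm_nonneg _)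
    fun n => ?_
  rw [Real.rpow_neg (by positivity)]
  exact le_inv_add_mul_sq (by positivity) (norm_nonneg _)

theorem exists_norm_le_of_summable_sq {ι E : Type*} [SeminormedAddCommGroup E] {h : ι → E}
    (hh : Summable fun i => ‖h i‖ ^ 2) : ∃ M, ∀ i, ‖h i‖ ≤ M :=
  ⟨1 + ∑' i, ‖h i‖ ^ 2, fun i => by
    nlinarith [hh.le_tsum i fun j _ => by positivity, sq_nonneg (‖h i‖ - 1)]⟩

section Summation

variable {α β γ δ E : Type*} [NormedAddCommGroup E] [CompleteSpace E]

theorem Summable.tsum_prod_prod {f : α × β × γ → E} (hf : Summable f) :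
    ∑' p, f p = ∑' (a) (b) (c), f (a, b, c) := by
  rw [hf.tsum_prod]
  exact tsum_congr fun a => (hf.prod_factor a).tsum_prod

theorem tsum_tsum_tsum_eq_tsum_of_equiv {f : δ → E} (hf : Summable f) (e : α × β × γ ≃ δ)
    {g : α → β → γ → E} (hg : ∀ a b c, g a b c = f (e (a, b, c))) :
    ∑' (a) (b) (c), g a b c = ∑' p, f p := by
  simp only [hg]
  exact (e.summable_iff.2 hf).tsum_prod_prod.symm.trans (e.tsum_eq f)

end Summation

theorem conv_cstar_apply (u : ℤ → ℂ) (m : ℤ) :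
    conv u (cstar u) m = ∑' j, u j * conj (u (j - m)) := by
  simp only [conv, cstar, neg_sub]

theorem hankelOp_apply (u g : ℤ → ℂ) (m : ℤ) :
    hankelOp u g m = if 0 ≤ m then ∑' k, u k * conj (g (k - m)) else 0 := by
  simp only [hankelOp, szego, conv, cstar, neg_sub]

theorem toeplitzOp_apply (b g : ℤ → ℂ) (m : ℤ) :
    toeplitzOp b g m = if 0 ≤ m then ∑' k, b k * g (m - k) else 0 :=
  rfl

noncomputable def cubicKernel (u h : ℤ → ℂ) (n : ℤ) (p : ℤ × ℤ × ℤ) : ℂ :=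
  u p.1 * conj (u p.2.1) * (u p.2.2 * conj (h (p.1 + p.2.2 - p.2.1 - n)))

section CubicKernel

variable {u h : ℤ → ℂ} {n : ℤ}

theorem summable_cubicKernel (hu : Summable fun k => ‖u k‖) {M : ℝ} (hM : ∀ m, ‖h m‖ ≤ M) :
    Summable (cubicKernel u h n) := by
  have hu3 : Summable fun p : ℤ × ℤ × ℤ => ‖u p.1 * (u p.2.1 * u p.2.2)‖ :=
    hu.mul_norm (g := fun q : ℤ × ℤ => u q.1 * u q.2) (hu.mul_norm hu)
  refine (hu3.mul_left M).of_norm_bounded fun p => ?_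
  calc ‖cubicKernel u h n p‖
      = ‖u p.1‖ * (‖u p.2.1‖ * ‖u p.2.2‖) * ‖h (p.1 + p.2.2 - p.2.1 - n)‖ := by
        simp only [cubicKernel, norm_mul, Complex.norm_conj]; ring
    _ ≤ ‖u p.1‖ * (‖u p.2.1‖ * ‖u p.2.2‖) * M := by gcongr; exact hM _
    _ = M * ‖u p.1 * (u p.2.1 * u p.2.2)‖ := by rw [norm_mul, norm_mul]; ring

-- The outer `Π` is invisible: `h (k - n) = 0` for `k < 0 ≤ n`.
theorem hankelOp_szego_conv_eq_tsum (hn : 0 ≤ n) (hh : ∀ m : ℤ, m < 0 → h m = 0)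
    (hF : Summable (cubicKernel u h n)) :
    hankelOp (szego (conv (conv u (cstar u)) u)) h n = ∑' p, cubicKernel u h n p := by
  calc hankelOp (szego (conv (conv u (cstar u)) u)) h n
      = ∑' k, szego (conv (conv u (cstar u)) u) k * conj (h (k - n)) := by
        rw [hankelOp_apply, if_pos hn]
    _ = ∑' (x) (y) (z), u z * conj (u (z - y)) * (u (x - y) * conj (h (x - n))) := by
        refine tsum_congr fun x => ?_
        by_cases hx : 0 ≤ x
        · rw [szego, if_pos hx, conv, ← tsum_mul_right]
          refine tsum_congr fun y => ?_
          rw [conv_cstar_apply, mul_assoc, ← tsum_mul_right]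
        · simp [szego, hx, hh (x - n) (by omega)]
    _ = ∑' p, cubicKernel u h n p := by
        refine tsum_tsum_tsum_eq_tsum_of_equiv hF
          ⟨fun p => (p.2.2, p.2.2 - p.2.1, p.1 - p.2.1),
            fun q => (q.2.2 + q.1 - q.2.1, q.1 - q.2.1, q.1),
            fun _ => by ext <;> dsimp <;> ring, fun _ => by ext <;> dsimp <;> ring⟩ fun x y z => ?_
        simp only [cubicKernel, Equiv.coe_fn_mk]
        ring_nf

theorem toeplitzOp_hankelOp_eq_tsum_indicator (hn : 0 ≤ n) (hF : Summable (cubicKernel u h n)) :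
    toeplitzOp (conv u (cstar u)) (hankelOp u h) n
      = ∑' p, {p : ℤ × ℤ × ℤ | p.1 - p.2.1 ≤ n}.indicator (cubicKernel u h n) p := by
  calc toeplitzOp (conv u (cstar u)) (hankelOp u h) n
      = ∑' x, conv u (cstar u) x * hankelOp u h (n - x) := by
        rw [toeplitzOp_apply, if_pos hn]
    _ = ∑' (x) (y) (z), if 0 ≤ n - x then
          u z * conj (u (z - x)) * (u y * conj (h (y - (n - x)))) else 0 := by
        refine tsum_congr fun x => ?_
        rw [hankelOp_apply]
        by_cases hx : 0 ≤ n - x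
        · simp only [if_pos hx]
          rw [← tsum_mul_left]
          refine tsum_congr fun y => ?_
          rw [conv_cstar_apply, ← tsum_mul_right]
        · simp only [if_neg hx, mul_zero, tsum_zero]
    _ = _ := by
        refine tsum_tsum_tsum_eq_tsum_of_equiv (hF.indicator _)
          ⟨fun p => (p.2.2, p.2.2 - p.1, p.2.1), fun q => (q.1 - q.2.1, q.2.2, q.1),
            fun _ => by ext <;> simp, fun _ => by ext <;> simp⟩ fun x y z => ?_
        simp only [Set.indicator_apply, Set.mem_ofPred_eq, cubicKernel, Equiv.coe_fn_mk]
        split_ifs <;> (try ring_nf) <;> omega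

theorem hankelOp_toeplitzOp_eq_tsum_indicator (hn : 0 ≤ n) (hF : Summable (cubicKernel u h n)) :
    hankelOp u (toeplitzOp (conv u (cstar u)) h) n
      = ∑' p, {p : ℤ × ℤ × ℤ | n ≤ p.1}.indicator (cubicKernel u h n) p := by
  calc hankelOp u (toeplitzOp (conv u (cstar u)) h) n
      = ∑' x, u x * conj (toeplitzOp (conv u (cstar u)) h (x - n)) := by
        rw [hankelOp_apply, if_pos hn]
    _ = ∑' (x) (y) (z), if 0 ≤ x - n then
          u x * conj (u z) * (u (z - y) * conj (h (x - n - y))) else 0 := by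
        refine tsum_congr fun x => ?_
        rw [toeplitzOp_apply]
        by_cases hx : 0 ≤ x - n
        · simp only [if_pos hx, conv_cstar_apply, Complex.conj_tsum, map_mul, Complex.conj_conj]
          rw [← tsum_mul_left]
          refine tsum_congr fun y => ?_
          rw [← tsum_mul_right, ← tsum_mul_left]
          exact tsum_congr fun z => by ring
        · simp only [if_neg hx, map_zero, mul_zero, tsum_zero]
    _ = _ := by
        refine tsum_tsum_tsum_eq_tsum_of_equiv (hF.indicator _)
          ⟨fun p => (p.1, p.2.2, p.2.2 - p.2.1), fun q => (q.1, q.2.1 - q.2.2, q.2.1),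
            fun _ => by ext <;> simp, fun _ => by ext <;> simp⟩ fun x y z => ?_
        simp only [Set.indicator_apply, Set.mem_ofPred_eq, cubicKernel, Equiv.coe_fn_mk]
        split_ifs <;> (try ring_nf) <;> omega

theorem hankelOp_hankelOp_hankelOp_eq_tsum_indicator (hn : 0 ≤ n)
    (hF : Summable (cubicKernel u h n)) :
    hankelOp u (hankelOp u (hankelOp u h)) n
      = ∑' p, ({p : ℤ × ℤ × ℤ | p.1 - p.2.1 ≤ n} ∩ {p | n ≤ p.1}).indicator
          (cubicKernel u h n) p := by
  calc hankelOp u (hankelOp u (hankelOp u h)) n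
      = ∑' x, u x * conj (hankelOp u (hankelOp u h) (x - n)) := by
        rw [hankelOp_apply, if_pos hn]
    _ = ∑' (x) (y) (z), if 0 ≤ x - n then (if 0 ≤ y - (x - n) then
          u x * conj (u y) * (u z * conj (h (z - (y - (x - n))))) else 0) else 0 := by
        refine tsum_congr fun x => ?_
        rw [hankelOp_apply u (hankelOp u h)]
        by_cases hx : 0 ≤ x - n
        · simp only [if_pos hx, Complex.conj_tsum, ← tsum_mul_left]
          refine tsum_congr fun y => ?_
          rw [hankelOp_apply u h]
          by_cases hy : 0 ≤ y - (x - n)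
          · simp only [if_pos hy, Complex.conj_tsum, map_mul, Complex.conj_conj, ← tsum_mul_left]
            exact tsum_congr fun z => by ring
          · simp only [if_neg hy, map_zero, mul_zero, tsum_zero]
        · simp only [if_neg hx, map_zero, mul_zero, tsum_zero]
    _ = _ := by
        refine tsum_tsum_tsum_eq_tsum_of_equiv (hF.indicator _) (Equiv.refl _) fun x y z => ?_
        simp only [Set.indicator_apply, Set.mem_inter_iff, Set.mem_ofPred_eq, cubicKernel,
          Equiv.refl_apply]
        split_ifs <;> (try ring_nf) <;> omega

theorem tsum_cubicKernel_eq_add_sub (hu : ∀ m : ℤ, m < 0 → u m = 0)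
    (hF : Summable (cubicKernel u h n)) :
    ∑' p, cubicKernel u h n p
      = ∑' p, {p : ℤ × ℤ × ℤ | p.1 - p.2.1 ≤ n}.indicator (cubicKernel u h n) p
        + ∑' p, {p : ℤ × ℤ × ℤ | n ≤ p.1}.indicator (cubicKernel u h n) p
        - ∑' p, ({p : ℤ × ℤ × ℤ | p.1 - p.2.1 ≤ n} ∩ {p | n ≤ p.1}).indicator
            (cubicKernel u h n) p := by
  have hsupp : Function.support (cubicKernel u h n)
      ⊆ {p : ℤ × ℤ × ℤ | p.1 - p.2.1 ≤ n} ∪ {p | n ≤ p.1} := by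
    intro p hp
    by_contra hp'
    simp only [Set.mem_union, Set.mem_ofPred_eq, not_or, not_le] at hp'
    exact hp (by simp [cubicKernel, hu p.2.1 (by omega)])
  rw [eq_sub_iff_add_eq, ← hF.tsum_add (hF.indicator _),
    ← (hF.indicator _).tsum_add (hF.indicator _)]
  refine tsum_congr fun p => ?_
  rw [← Set.indicator_union_add_inter_apply, Set.indicator_eq_self.2 hsupp]

end CubicKernel

/-- For `u ∈ H^s₊(S¹)` with `s > 1`, the identity
`H_{Π(|u|²u)} = T_{|u|²} H_u + H_u T_{|u|²} - H_u³` holds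
(here `|u|² = u ⬝ conj u` has coefficients `conv u (cstar u)`, and
`|u|²u` has coefficients `conv (conv u (cstar u)) u`). -/
theorem stmt3 (s : ℝ) (hs : 1 < s) (u : ℤ → ℂ)
    (hsupp : ∀ n : ℤ, n < 0 → u n = 0)
    (hreg : Summable fun n : ℤ => (1 + (n : ℝ) ^ 2) ^ s * ‖u n‖ ^ 2)
    (h : ℤ → ℂ) (hhsupp : ∀ n : ℤ, n < 0 → h n = 0)
    (hh : Summable fun n : ℤ => ‖h n‖ ^ 2) :
    ∀ n : ℤ, hankelOp (szego (conv (conv u (cstar u)) u)) h n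
      = toeplitzOp (conv u (cstar u)) (hankelOp u h) n
        + hankelOp u (toeplitzOp (conv u (cstar u)) h) n
        - hankelOp u (hankelOp u (hankelOp u h)) n := by
  intro n
  rcases lt_or_ge n 0 with hn | hn
  · simp only [hankelOp, toeplitzOp, szego, if_neg hn.not_ge, add_zero, sub_zero]
  obtain ⟨M, hM⟩ := exists_norm_le_of_summable_sq hh
  have hF : Summable (cubicKernel u h n) :=
    summable_cubicKernel (summable_norm_of_summable_one_add_sq_rpow_mul_sq (by linarith) hreg) hM
  rw [hankelOp_szego_conv_eq_tsum hn hhsupp hF, toeplitzOp_hankelOp_eq_tsum_indicator hn hF,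
    hankelOp_toeplitzOp_eq_tsum_indicator hn hF, hankelOp_hankelOp_hankelOp_eq_tsum_indicator hn hF]
  exact tsum_cubicKernel_eq_add_sub hsupp hF
end

section
/- Let u = b + cz/(1-pz) with |p| < 1 and let Q = |b|^2 + |c|^2/(1-|p|^2), E_α = (1/4)(1/2π)∫|u|^4 dθ + (α/2)|b|^2 for a real α. Then the equality E_α = Q^2/4 + αQ/2 holds if and only if |b + conj(p)c/(1-|p|^2)| = √α (in particular this requires α ≥ 0). -/
/-!
Writing `d = 1 - |p|²` and `x = b + conj(p) c / d`, the defect `E_α - (Q²/4 + αQ/2)` factors as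
`|c|² / (2d) · (|x|² - α)`. Since `c ≠ 0` and `d > 0`, equality holds exactly when `|x|² = α`.
-/

open ComplexConjugate

lemma Complex.sq_norm_add_conj_mul_div_mul_sq (b c p : ℂ) {d : ℝ} (hd : d ≠ 0) :
    ‖b + conj p * c / (d : ℂ)‖ ^ 2 * d ^ 2
      = ‖b‖ ^ 2 * d ^ 2 + 2 * (b * p * conj c).re * d + ‖p‖ ^ 2 * ‖c‖ ^ 2 := by
  have hd' : (d : ℂ) ≠ 0 := by exact_mod_cast hd
  rw [← sq_abs d, ← Real.norm_eq_abs, ← Complex.norm_real, ← mul_pow, ← norm_mul,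
    add_mul, div_mul_cancel₀ _ hd']
  simp only [Complex.sq_norm, Complex.normSq_apply, Complex.add_re, Complex.add_im,
    Complex.mul_re, Complex.mul_im, Complex.ofReal_re, Complex.ofReal_im,
    Complex.conj_re, Complex.conj_im]
  ring

lemma energy_sub_eq_mul_sq_norm_sub (α : ℝ) (b c p : ℂ) (hp : ‖p‖ < 1) :
    ((1 / 4) * (‖b‖ ^ 4 + 4 * ‖b‖ ^ 2 * ‖c‖ ^ 2 / (1 - ‖p‖ ^ 2)
        + ‖c‖ ^ 4 * (1 + ‖p‖ ^ 2) / (1 - ‖p‖ ^ 2) ^ 3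
        + 4 * ‖c‖ ^ 2 * (b * p * conj c).re / (1 - ‖p‖ ^ 2) ^ 2)
      + (α / 2) * ‖b‖ ^ 2)
      - ((‖b‖ ^ 2 + ‖c‖ ^ 2 / (1 - ‖p‖ ^ 2)) ^ 2 / 4
        + α * (‖b‖ ^ 2 + ‖c‖ ^ 2 / (1 - ‖p‖ ^ 2)) / 2)
      = ‖c‖ ^ 2 / (2 * (1 - ‖p‖ ^ 2))
        * (‖b + conj p * c / ((1 - ‖p‖ ^ 2 : ℝ) : ℂ)‖ ^ 2 - α) := by
  have hd : 1 - ‖p‖ ^ 2 ≠ 0 := by nlinarith [norm_nonneg p]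
  have hx := Complex.sq_norm_add_conj_mul_div_mul_sq b c p hd
  rw [← eq_div_iff (pow_ne_zero 2 hd)] at hx
  rw [hx]
  field_simp
  ring

lemma sq_eq_iff_nonneg_and_eq_sqrt {t α : ℝ} (ht : 0 ≤ t) :
    t ^ 2 = α ↔ 0 ≤ α ∧ t = √α := by
  constructor
  · rintro rfl
    exact ⟨by positivity, (Real.sqrt_sq ht).symm⟩
  · rintro ⟨hα, rfl⟩
    exact Real.sq_sqrt hα

/-- For `u = b + cz/(1-pz)` with `|p| < 1`, `c ≠ 0`, with
`Q = |b|² + |c|²/(1-|p|²)` (squared `L²` norm),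
`E_α = (1/4)(1/2π)∫|u|⁴ + (α/2)|b|²` (the `L⁴` integral being given by its
explicit value), the equality `E_α = Q²/4 + αQ/2` holds if and only if
`α ≥ 0` and `|b + conj(p) c /(1-|p|²)| = √α`. -/
theorem stmt8 (α : ℝ) (b c p : ℂ) (hp : ‖p‖ < 1) (hc : c ≠ 0) :
    ((1 / 4) * (‖b‖ ^ 4 + 4 * ‖b‖ ^ 2 * ‖c‖ ^ 2 / (1 - ‖p‖ ^ 2)
        + ‖c‖ ^ 4 * (1 + ‖p‖ ^ 2) / (1 - ‖p‖ ^ 2) ^ 3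
        + 4 * ‖c‖ ^ 2 * (b * p * (starRingEnd ℂ) c).re / (1 - ‖p‖ ^ 2) ^ 2)
      + (α / 2) * ‖b‖ ^ 2
      = (‖b‖ ^ 2 + ‖c‖ ^ 2 / (1 - ‖p‖ ^ 2)) ^ 2 / 4
        + α * (‖b‖ ^ 2 + ‖c‖ ^ 2 / (1 - ‖p‖ ^ 2)) / 2)
    ↔ (0 ≤ α ∧
        ‖b + (starRingEnd ℂ) p * c / (((1 - ‖p‖ ^ 2 : ℝ)) : ℂ)‖ = Real.sqrt α) := by
  have hd : 0 < 1 - ‖p‖ ^ 2 := by nlinarith [norm_nonneg p]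
  have hcoef : ‖c‖ ^ 2 / (2 * (1 - ‖p‖ ^ 2)) ≠ 0 := by positivity
  rw [← sub_eq_zero, energy_sub_eq_mul_sq_norm_sub α b c p hp, mul_eq_zero,
    or_iff_right hcoef, sub_eq_zero, sq_eq_iff_nonneg_and_eq_sqrt (norm_nonneg _)]
end

section
/- Let b, c, p : ℝ → ℂ be C^1 functions with |p(t)| < 1 and c(t) ≠ 0, solving the ODE system i b' = |b|^2 b + 2b|c|^2/(1-|p|^2) + |c|^2 c conj(p)/(1-|p|^2)^2 + αb, i c' = 2|b|^2 c + 2b|c|^2 p/(1-|p|^2) + |c|^2 c/(1-|p|^2)^2, i p' = c conj(b) + |c|^2 p/(1-|p|^2). Then d|c|/dt = (2|c|/(1-|p|^2)) · Im(b p conj(c)). -/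
/-- Right-hand side of the `b` equation: `b' = -i(|b|²b + 2b|c|²/(1-|p|²)
  + |c|²c p̄/(1-|p|²)² + αb)`. -/
noncomputable def rhsB (α : ℝ) (b c p : ℂ) : ℂ :=
  -Complex.I * ((‖b‖ ^ 2 : ℝ) * b + 2 * b * (‖c‖ ^ 2 : ℝ) / ((1 - ‖p‖ ^ 2 : ℝ) : ℂ)
    + (‖c‖ ^ 2 : ℝ) * c * (starRingEnd ℂ) p / ((1 - ‖p‖ ^ 2 : ℝ) : ℂ) ^ 2 + (α : ℂ) * b)

/-- Right-hand side of the `c` equation: `c' = -i(2|b|²c + 2b|c|²p/(1-|p|²)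
  + |c|²c/(1-|p|²)²)`. -/
noncomputable def rhsC (b c p : ℂ) : ℂ :=
  -Complex.I * (2 * (‖b‖ ^ 2 : ℝ) * c + 2 * b * (‖c‖ ^ 2 : ℝ) * p / ((1 - ‖p‖ ^ 2 : ℝ) : ℂ)
    + (‖c‖ ^ 2 : ℝ) * c / ((1 - ‖p‖ ^ 2 : ℝ) : ℂ) ^ 2)

/-- Right-hand side of the `p` equation: `p' = -i(c b̄ + |c|²p/(1-|p|²))`. -/
noncomputable def rhsP (b c p : ℂ) : ℂ :=
  -Complex.I * (c * (starRingEnd ℂ) b + (‖c‖ ^ 2 : ℝ) * p / ((1 - ‖p‖ ^ 2 : ℝ) : ℂ))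

/-!
Since `|c|' = Re(c' c̄) / |c|` and `c' c̄ = -i(2|b|²|c|² + 2 b p c̄ |c|²/(1-|p|²) + |c|⁴/(1-|p|²)²)`,
the two outer terms are purely imaginary after the rotation by `-i`, and the middle one
contributes `2|c|²/(1-|p|²) · Im(b p c̄)`.
-/

open ComplexConjugate

open scoped RealInnerProductSpace in
theorem HasDerivAt.norm {F : Type*} [NormedAddCommGroup F] [InnerProductSpace ℝ F]
    {f : ℝ → F} {f' : F} {x : ℝ} (hf : HasDerivAt f f' x) (h0 : f x ≠ 0) :
    HasDerivAt (‖f ·‖) (⟪f x, f'⟫ / ‖f x‖) x := by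
  have hsqrt := hf.norm_sq.sqrt (by positivity)
  simp only [Real.sqrt_sq (norm_nonneg _)] at hsqrt
  convert hsqrt using 1
  field_simp

theorem re_rhsC_mul_conj (b c p : ℂ) :
    (rhsC b c p * conj c).re = 2 * ‖c‖ ^ 2 / (1 - ‖p‖ ^ 2) * (b * p * conj c).im := by
  simp only [rhsC, ← Complex.ofReal_pow, Complex.div_ofReal_re, Complex.div_ofReal_im,
    Complex.mul_re, Complex.mul_im, Complex.ofReal_re, Complex.ofReal_im, Complex.neg_re,
    Complex.neg_im, Complex.I_re, Complex.I_im, Complex.add_re, Complex.add_im,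
    Complex.conj_re, Complex.conj_im, Complex.re_ofNat, Complex.im_ofNat]
  ring

theorem stmt10_general (b c p : ℝ → ℂ) (hc0 : ∀ t, c t ≠ 0)
    (hc : ∀ t, HasDerivAt c (rhsC (b t) (c t) (p t)) t) :
    ∀ t, HasDerivAt (fun τ => ‖c τ‖)
      (2 * ‖c t‖ / (1 - ‖p t‖ ^ 2) * (b t * p t * (starRingEnd ℂ) (c t)).im) t := by
  intro t
  have hnorm := (hc t).norm (hc0 t)
  rw [Complex.inner, re_rhsC_mul_conj] at hnorm
  convert hnorm using 1
  have hc_norm : ‖c t‖ ≠ 0 := norm_ne_zero_iff.mpr (hc0 t)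
  field_simp

/-- If `b, c, p : ℝ → ℂ` are `C¹`, with `|p(t)| < 1` and `c(t) ≠ 0`, and solve
the ODE system of the α-Szegő equation on `u = b + cz/(1-pz)`, then
`d|c|/dt = (2|c|/(1-|p|²)) Im(b p c̄)`. -/
theorem stmt10 (α : ℝ) (b c p : ℝ → ℂ)
    (hp1 : ∀ t, ‖p t‖ < 1) (hc0 : ∀ t, c t ≠ 0)
    (hb : ∀ t, HasDerivAt b (rhsB α (b t) (c t) (p t)) t)
    (hc : ∀ t, HasDerivAt c (rhsC (b t) (c t) (p t)) t)
    (hp : ∀ t, HasDerivAt p (rhsP (b t) (c t) (p t)) t) :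
    ∀ t, HasDerivAt (fun τ => ‖c τ‖)
      (2 * ‖c t‖ / (1 - ‖p t‖ ^ 2) * (b t * p t * (starRingEnd ℂ) (c t)).im) t :=
  stmt10_general b c p hc0 hc
end

section
/- Along solutions of the ODE system i b' = |b|^2 b + 2b|c|^2/(1-|p|^2) + |c|^2 c conj(p)/(1-|p|^2)^2 + αb, i c' = 2|b|^2 c + 2b|c|^2 p/(1-|p|^2) + |c|^2 c/(1-|p|^2)^2, i p' = c conj(b) + |c|^2 p/(1-|p|^2), the quantities Q = |b|^2 + |c|^2/(1-|p|^2) and M = |c|^2/(1-|p|^2)^2 are conserved (have zero time derivative). -/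
/-! Since `d/dt ‖f‖² = 2⟪f, f'⟫` and `⟪f, -i F⟫ = Im (F f̄)`, only the non-real products in
`F_b b̄`, `F_c c̄`, `F_p p̄` contribute; each is a multiple of `Im (c b̄ p̄)`, and in the derivatives
of `Q` and `M` these multiples cancel. -/

open ComplexConjugate

lemma inner_rhsB (α : ℝ) (b c p : ℂ) :
    inner ℝ b (rhsB α b c p) = ‖c‖ ^ 2 * (c * conj b * conj p).im / (1 - ‖p‖ ^ 2) ^ 2 := by
  rw [Complex.inner]
  simp only [rhsB, Complex.mul_re, Complex.mul_im, Complex.add_re, Complex.add_im,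
    Complex.div_ofReal_re, Complex.div_ofReal_im, Complex.ofReal_re, Complex.ofReal_im, Complex.I_re,
    Complex.I_im, Complex.neg_re, Complex.neg_im, Complex.conj_re, Complex.conj_im,
    Complex.re_ofNat, Complex.im_ofNat, ← Complex.ofReal_pow, Complex.sq_norm, Complex.normSq_apply]
  ring

lemma inner_rhsC (b c p : ℂ) :
    inner ℝ c (rhsC b c p) = -2 * ‖c‖ ^ 2 * (c * conj b * conj p).im / (1 - ‖p‖ ^ 2) := by
  rw [Complex.inner]
  simp only [rhsC, Complex.mul_re, Complex.mul_im, Complex.add_re, Complex.add_im,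
    Complex.div_ofReal_re, Complex.div_ofReal_im, Complex.ofReal_re, Complex.ofReal_im, Complex.I_re,
    Complex.I_im, Complex.neg_re, Complex.neg_im, Complex.conj_re, Complex.conj_im,
    Complex.re_ofNat, Complex.im_ofNat, ← Complex.ofReal_pow, Complex.sq_norm, Complex.normSq_apply]
  ring

lemma inner_rhsP (b c p : ℂ) :
    inner ℝ p (rhsP b c p) = (c * conj b * conj p).im := by
  rw [Complex.inner]
  simp only [rhsP, Complex.mul_re, Complex.mul_im, Complex.add_re, Complex.add_im,
    Complex.div_ofReal_re, Complex.div_ofReal_im, Complex.ofReal_re, Complex.ofReal_im, Complex.I_re,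
    Complex.I_im, Complex.neg_re, Complex.neg_im, Complex.conj_re, Complex.conj_im,
    Complex.sq_norm, Complex.normSq_apply]
  ring

section

variable {α : ℝ} {b c p : ℝ → ℂ} {t : ℝ}

theorem hasDerivAt_mass (hb : HasDerivAt b (rhsB α (b t) (c t) (p t)) t)
    (hc : HasDerivAt c (rhsC (b t) (c t) (p t)) t) (hp : HasDerivAt p (rhsP (b t) (c t) (p t)) t)
    (hD : 1 - ‖p t‖ ^ 2 ≠ 0) :
    HasDerivAt (fun τ => ‖b τ‖ ^ 2 + ‖c τ‖ ^ 2 / (1 - ‖p τ‖ ^ 2)) 0 t := by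
  refine (hb.norm_sq.add (hc.norm_sq.div (hp.norm_sq.const_sub 1) hD)).congr_deriv ?_
  rw [inner_rhsB, inner_rhsC, inner_rhsP]
  field_simp
  ring

theorem hasDerivAt_momentum (hc : HasDerivAt c (rhsC (b t) (c t) (p t)) t)
    (hp : HasDerivAt p (rhsP (b t) (c t) (p t)) t) (hD : 1 - ‖p t‖ ^ 2 ≠ 0) :
    HasDerivAt (fun τ => ‖c τ‖ ^ 2 / (1 - ‖p τ‖ ^ 2) ^ 2) 0 t := by
  refine (hc.norm_sq.div ((hp.norm_sq.const_sub 1).fun_pow 2) (pow_ne_zero 2 hD)).congr_deriv ?_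
  rw [inner_rhsC, inner_rhsP]
  field_simp
  ring

end

/-- Along `C¹` solutions of the ODE system of the α-Szegő equation on
`u = b + cz/(1-pz)`, the mass `Q = |b|² + |c|²/(1-|p|²)` and the momentum
`M = |c|²/(1-|p|²)²` are conserved (their time derivatives vanish). -/
theorem stmt11 (α : ℝ) (b c p : ℝ → ℂ)
    (hp1 : ∀ t, ‖p t‖ < 1)
    (hb : ∀ t, HasDerivAt b (rhsB α (b t) (c t) (p t)) t)
    (hc : ∀ t, HasDerivAt c (rhsC (b t) (c t) (p t)) t)
    (hp : ∀ t, HasDerivAt p (rhsP (b t) (c t) (p t)) t) :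
    ∀ t, HasDerivAt (fun τ => ‖b τ‖ ^ 2 + ‖c τ‖ ^ 2 / (1 - ‖p τ‖ ^ 2)) 0 t ∧
      HasDerivAt (fun τ => ‖c τ‖ ^ 2 / (1 - ‖p τ‖ ^ 2) ^ 2) 0 t := by
  intro t
  have hD : 1 - ‖p t‖ ^ 2 ≠ 0 := (sub_pos.2 (pow_lt_one₀ (norm_nonneg _) (hp1 t) two_ne_zero)).ne'
  exact ⟨hasDerivAt_mass (hb t) (hc t) (hp t) hD, hasDerivAt_momentum (hc t) (hp t) hD⟩
end

section
/- Suppose b, c, p ∈ ℂ with |p| < 1, c ≠ 0, satisfy |b + conj(p)c/(1-|p|^2)| = √α with α > 0. Set Q = |b|^2 + |c|^2/(1-|p|^2) and M = |c|^2/(1-|p|^2)^2. Then 4(Im(b p conj(c)))^2/(1-|p|^2)^2 = 4QM - 4α√M |c| - (α - Q - M)^2. -/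
/-!
With `d = 1 - |p|²`, expanding `|b + p̄ c / d|² = α` gives `α = |b|² + |p|²|c|²/d² + 2 Re(b p c̄)/d`,
so `Re(b p c̄)` is determined by `α`; since `Re² + Im² = |b|²|p|²|c|²`, the claim becomes a polynomial
identity after clearing `d` (using `|p|² = 1 - d` and `√M = |c|/d`).
-/

lemma sq_norm_add_conj_mul_div (b c p : ℂ) (d : ℝ) :
    ‖b + (starRingEnd ℂ) p * c / (d : ℂ)‖ ^ 2
      = ‖b‖ ^ 2 + ‖p‖ ^ 2 * ‖c‖ ^ 2 / d ^ 2 + 2 * (b * p * (starRingEnd ℂ) c).re / d := by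
  have hre : (b * (starRingEnd ℂ) ((starRingEnd ℂ) p * c / (d : ℂ))).re
      = (b * p * (starRingEnd ℂ) c).re / d := by
    rw [← Complex.div_ofReal_re]
    simp only [map_div₀, map_mul, Complex.conj_conj, Complex.conj_ofReal]
    ring_nf
  simp only [Complex.sq_norm, Complex.normSq_add, hre, Complex.normSq_div, Complex.normSq_mul,
    Complex.normSq_conj, Complex.normSq_ofReal]
  ring

lemma im_sq_identity (P B C X Y α : ℝ) (hP : P ^ 2 ≠ 1)
    (hXY : X ^ 2 + Y ^ 2 = B ^ 2 * P ^ 2 * C ^ 2)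
    (hα : α = B ^ 2 + P ^ 2 * C ^ 2 / (1 - P ^ 2) ^ 2 + 2 * X / (1 - P ^ 2)) :
    4 * Y ^ 2 / (1 - P ^ 2) ^ 2
      = 4 * (B ^ 2 + C ^ 2 / (1 - P ^ 2)) * (C ^ 2 / (1 - P ^ 2) ^ 2)
        - 4 * α * (C / (1 - P ^ 2)) * C
        - (α - (B ^ 2 + C ^ 2 / (1 - P ^ 2)) - C ^ 2 / (1 - P ^ 2) ^ 2) ^ 2 := by
  have hd : 1 - P ^ 2 ≠ 0 := sub_ne_zero.mpr (Ne.symm hP)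
  subst hα
  field_simp
  linear_combination 4 * (1 - P ^ 2) ^ 2 * hXY

theorem stmt12_general (α : ℝ) (hα : 0 < α) (b c p : ℂ) (hp : ‖p‖ < 1)
    (h : ‖b + (starRingEnd ℂ) p * c / (((1 - ‖p‖ ^ 2 : ℝ)) : ℂ)‖ = Real.sqrt α) :
    4 * (b * p * (starRingEnd ℂ) c).im ^ 2 / (1 - ‖p‖ ^ 2) ^ 2
      = 4 * (‖b‖ ^ 2 + ‖c‖ ^ 2 / (1 - ‖p‖ ^ 2)) * (‖c‖ ^ 2 / (1 - ‖p‖ ^ 2) ^ 2)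
        - 4 * α * Real.sqrt (‖c‖ ^ 2 / (1 - ‖p‖ ^ 2) ^ 2) * ‖c‖
        - (α - (‖b‖ ^ 2 + ‖c‖ ^ 2 / (1 - ‖p‖ ^ 2)) - ‖c‖ ^ 2 / (1 - ‖p‖ ^ 2) ^ 2) ^ 2 := by
  have hd : 0 < 1 - ‖p‖ ^ 2 := by nlinarith [norm_nonneg p]
  have hsqrt : Real.sqrt (‖c‖ ^ 2 / (1 - ‖p‖ ^ 2) ^ 2) = ‖c‖ / (1 - ‖p‖ ^ 2) := by
    rw [← div_pow, Real.sqrt_sq (by positivity)]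
  have hXY : (b * p * (starRingEnd ℂ) c).re ^ 2 + (b * p * (starRingEnd ℂ) c).im ^ 2
      = ‖b‖ ^ 2 * ‖p‖ ^ 2 * ‖c‖ ^ 2 := by
    rw [← Complex.sq_norm_sub_sq_re, norm_mul, norm_mul, Complex.norm_conj]; ring
  have hαX : α = ‖b‖ ^ 2 + ‖p‖ ^ 2 * ‖c‖ ^ 2 / (1 - ‖p‖ ^ 2) ^ 2
      + 2 * (b * p * (starRingEnd ℂ) c).re / (1 - ‖p‖ ^ 2) := by
    rw [← sq_norm_add_conj_mul_div, h, Real.sq_sqrt hα.le]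
  rw [hsqrt]
  exact im_sq_identity _ _ _ _ _ α (by linarith) hXY hαX

/-- Key algebraic identity: if `b, c, p ∈ ℂ`, `|p| < 1`, `c ≠ 0` satisfy
`|b + p̄ c/(1-|p|²)| = √α` with `α > 0`, and `Q = |b|² + |c|²/(1-|p|²)`,
`M = |c|²/(1-|p|²)²`, then
`4(Im(b p c̄))²/(1-|p|²)² = 4QM - 4α√M |c| - (α - Q - M)²`. -/
theorem stmt12 (α : ℝ) (hα : 0 < α) (b c p : ℂ) (hp : ‖p‖ < 1) (hc : c ≠ 0)
    (h : ‖b + (starRingEnd ℂ) p * c / (((1 - ‖p‖ ^ 2 : ℝ)) : ℂ)‖ = Real.sqrt α) :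
    4 * (b * p * (starRingEnd ℂ) c).im ^ 2 / (1 - ‖p‖ ^ 2) ^ 2
      = 4 * (‖b‖ ^ 2 + ‖c‖ ^ 2 / (1 - ‖p‖ ^ 2)) * (‖c‖ ^ 2 / (1 - ‖p‖ ^ 2) ^ 2)
        - 4 * α * Real.sqrt (‖c‖ ^ 2 / (1 - ‖p‖ ^ 2) ^ 2) * ‖c‖
        - (α - (‖b‖ ^ 2 + ‖c‖ ^ 2 / (1 - ‖p‖ ^ 2)) - ‖c‖ ^ 2 / (1 - ‖p‖ ^ 2) ^ 2) ^ 2 :=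
  stmt12_general α hα b c p hp h
end

section
/- Let u(z) = b + cz/(1-pz) with |p| < 1, c ≠ 0, and s > 1/2. Then there exist constants A_s, B_s > 0 depending only on s such that, whenever |p| ≥ 1/2, A_s |c|^2/(1-|p|^2)^{2s+1} ≤ ||u - b||_{H^s}^2 ≤ B_s |c|^2/(1-|p|^2)^{2s+1}, where ||v||_{H^s}^2 = Σ_{k≥0}(1+k^2)^s |v̂(k)|^2. -/
/-!
With `x = ‖p‖²` the sum is `‖c‖² ∑ (1 + (k+1)²)^s x^k`, and `(1 + (k+1)²)^s` lies between
`(k+1)^(2s)` and `2^s (k+1)^(2s)`, so it suffices to compare `∑ (k+1)^α x^k` with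
`(1-x)^(-(α+1))`. Weighting by the geometric distribution `(1-x) x^k`, whose mean
`∑ (1-x) x^k (k+1)` is `1/(1-x)`, Jensen's inequality gives the lower bound for `α ≥ 1`. For the
upper bound, the power-mean inequality reduces the exponent `α` to an integer `n ≥ α`, where
`(k+1)^n ≤ n! C(k+n, n)` and `∑ C(k+n, n) x^k = (1-x)^(-(n+1))`.
-/

open Real Nat

theorem tsum_mul_le_rpow_tsum_mul_rpow {ι : Type*} {w f : ι → ℝ} {p : ℝ} (hp : 1 ≤ p)
    (hw : ∀ i, 0 ≤ w i) (hw_sum : HasSum w 1) (hf : ∀ i, 0 ≤ f i)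
    (hwf : Summable fun i => w i * f i ^ p) :
    ∑' i, w i * f i ≤ (∑' i, w i * f i ^ p) ^ p⁻¹ := by
  have hwf_nonneg : ∀ i, 0 ≤ w i * f i ^ p := fun i => mul_nonneg (hw i) (rpow_nonneg (hf i) p)
  refine tsum_le_of_sum_le' (rpow_nonneg (tsum_nonneg hwf_nonneg) _) fun s => ?_
  calc ∑ i ∈ s, w i * f i
      ≤ (∑ i ∈ s, w i) ^ (1 - p⁻¹) * (∑ i ∈ s, w i * f i ^ p) ^ p⁻¹ :=
        inner_le_weight_mul_Lp_of_nonneg s hp w f hw hf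
    _ ≤ 1 * (∑' i, w i * f i ^ p) ^ p⁻¹ := by
        refine mul_le_mul ?_ ?_ (rpow_nonneg (Finset.sum_nonneg fun i _ => hwf_nonneg i) _)
          zero_le_one
        · exact rpow_le_one (Finset.sum_nonneg fun i _ => hw i)
            (sum_le_hasSum s (fun i _ => hw i) hw_sum) (sub_nonneg.2 (inv_le_one_of_one_le₀ hp))
        · gcongr
          · exact Finset.sum_nonneg fun i _ => hwf_nonneg i
          · exact hwf.sum_le_tsum s fun i _ => hwf_nonneg i
    _ = (∑' i, w i * f i ^ p) ^ p⁻¹ := one_mul _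

theorem add_one_pow_le_factorial_mul_choose (n k : ℕ) :
    ((k : ℝ) + 1) ^ n ≤ n ! * (k + n).choose n := by
  exact_mod_cast (pow_succ_le_ascFactorial (k + 1) n).trans_eq
    (ascFactorial_eq_factorial_mul_choose k n)

section GeometricMoments

variable {x : ℝ}

theorem hasSum_one_sub_mul_geometric (hx0 : 0 ≤ x) (hx1 : x < 1) :
    HasSum (fun k : ℕ => (1 - x) * x ^ k) 1 := by
  simpa [mul_inv_cancel₀ (sub_ne_zero.2 hx1.ne')] using
    (hasSum_geometric_of_lt_one hx0 hx1).mul_left (1 - x)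

theorem add_one_pow_mul_geometric_le (n : ℕ) (hx0 : 0 ≤ x) (k : ℕ) :
    ((k : ℝ) + 1) ^ n * x ^ k ≤ n ! * ((k + n).choose n * x ^ k) := by
  rw [← mul_assoc]
  exact mul_le_mul_of_nonneg_right (add_one_pow_le_factorial_mul_choose n k) (by positivity)

theorem summable_add_one_pow_mul_geometric (n : ℕ) (hx0 : 0 ≤ x) (hx1 : x < 1) :
    Summable fun k : ℕ => ((k : ℝ) + 1) ^ n * x ^ k := by
  have hx : ‖x‖ < 1 := by rwa [norm_of_nonneg hx0]
  exact .of_nonneg_of_le (fun k => by positivity) (add_one_pow_mul_geometric_le n hx0)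
    ((hasSum_choose_mul_geometric_of_norm_lt_one n hx).summable.mul_left _)

theorem tsum_add_one_pow_mul_geometric_le (n : ℕ) (hx0 : 0 ≤ x) (hx1 : x < 1) :
    ∑' k : ℕ, ((k : ℝ) + 1) ^ n * x ^ k ≤ n ! / (1 - x) ^ (n + 1) := by
  have hx : ‖x‖ < 1 := by rwa [norm_of_nonneg hx0]
  have := hasSum_le (add_one_pow_mul_geometric_le n hx0)
    (summable_add_one_pow_mul_geometric n hx0 hx1).hasSum
    ((hasSum_choose_mul_geometric_of_norm_lt_one n hx).mul_left _)
  rwa [mul_one_div] at this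

theorem hasSum_add_one_mul_geometric (hx0 : 0 ≤ x) (hx1 : x < 1) :
    HasSum (fun k : ℕ => ((k : ℝ) + 1) * x ^ k) (1 / (1 - x) ^ 2) := by
  have hx : ‖x‖ < 1 := by rwa [norm_of_nonneg hx0]
  simpa using hasSum_choose_mul_geometric_of_norm_lt_one 1 hx

theorem summable_add_one_rpow_mul_geometric (α : ℝ) (hx0 : 0 ≤ x) (hx1 : x < 1) :
    Summable fun k : ℕ => ((k : ℝ) + 1) ^ α * x ^ k := by
  refine .of_nonneg_of_le (fun k => by positivity) (fun k => ?_)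
    (summable_add_one_pow_mul_geometric ⌈α⌉₊ hx0 hx1)
  gcongr
  rw [← rpow_natCast]
  exact rpow_le_rpow_of_exponent_le (le_add_of_nonneg_left k.cast_nonneg) (le_ceil α)

theorem one_div_one_sub_rpow_le_tsum_add_one_rpow_mul_geometric {α : ℝ} (hα : 1 ≤ α)
    (hx0 : 0 ≤ x) (hx1 : x < 1) :
    1 / (1 - x) ^ (α + 1) ≤ ∑' k : ℕ, ((k : ℝ) + 1) ^ α * x ^ k := by
  have hy : 0 < 1 - x := sub_pos.2 hx1
  have hS := summable_add_one_rpow_mul_geometric α hx0 hx1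
  have hmean : ∑' k : ℕ, (1 - x) * x ^ k * ((k : ℝ) + 1) = 1 / (1 - x) := by
    rw [(((hasSum_add_one_mul_geometric hx0 hx1).mul_left (1 - x)).congr_fun
      fun k => by ring).tsum_eq]
    field_simp
  have hmoment : ∑' k : ℕ, (1 - x) * x ^ k * ((k : ℝ) + 1) ^ α
      = (1 - x) * ∑' k : ℕ, ((k : ℝ) + 1) ^ α * x ^ k := by
    rw [← tsum_mul_left]
    exact tsum_congr fun k => by ring
  have hjensen := tsum_mul_le_rpow_tsum_mul_rpow (f := fun k : ℕ => (k : ℝ) + 1) hα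
    (fun k => by positivity) (hasSum_one_sub_mul_geometric hx0 hx1) (fun k => by positivity)
    ((hS.mul_left (1 - x)).congr fun k => by ring)
  rw [hmean, hmoment, le_rpow_inv_iff_of_pos (by positivity)
    (mul_nonneg hy.le (tsum_nonneg fun k => by positivity)) (by linarith),
    div_rpow zero_le_one hy.le, one_rpow] at hjensen
  rw [rpow_add_one hy.ne', ← div_div, div_le_iff₀ hy]
  linarith

theorem tsum_add_one_rpow_mul_geometric_le {α : ℝ} {n : ℕ} (hα : 0 < α) (hαn : α ≤ n)
    (hx0 : 0 ≤ x) (hx1 : x < 1) :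
    ∑' k : ℕ, ((k : ℝ) + 1) ^ α * x ^ k ≤ n ! / (1 - x) ^ (α + 1) := by
  have hy : 0 < 1 - x := sub_pos.2 hx1
  set p : ℝ := n / α
  have hp : 1 ≤ p := (one_le_div hα).2 hαn
  have hpow : ∀ k : ℕ, (((k : ℝ) + 1) ^ α) ^ p = ((k : ℝ) + 1) ^ n := fun k => by
    rw [← rpow_mul (by positivity), mul_div_cancel₀ _ hα.ne', rpow_natCast]
  have hjensen := tsum_mul_le_rpow_tsum_mul_rpow (f := fun k : ℕ => ((k : ℝ) + 1) ^ α) hp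
    (fun k => by positivity) (hasSum_one_sub_mul_geometric hx0 hx1) (fun k => by positivity)
    (((summable_add_one_pow_mul_geometric n hx0 hx1).mul_left (1 - x)).congr fun k => by
      rw [hpow]; ring)
  simp only [hpow] at hjensen
  have hmoment : ∑' k : ℕ, (1 - x) * x ^ k * ((k : ℝ) + 1) ^ n ≤ (n ! / (1 - x) ^ α) ^ p :=
    calc ∑' k : ℕ, (1 - x) * x ^ k * ((k : ℝ) + 1) ^ n
        = (1 - x) * ∑' k : ℕ, ((k : ℝ) + 1) ^ n * x ^ k := by
          rw [← tsum_mul_left]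
          exact tsum_congr fun k => by ring
      _ ≤ (1 - x) * (n ! / (1 - x) ^ (n + 1)) := by
          gcongr
          exact tsum_add_one_pow_mul_geometric_le n hx0 hx1
      _ = n ! / (1 - x) ^ n := by
          field_simp
          ring
      _ ≤ (n ! : ℝ) ^ p / (1 - x) ^ n := by
          gcongr
          exact self_le_rpow_of_one_le (by exact_mod_cast n.factorial_pos) hp
      _ = (n ! / (1 - x) ^ α) ^ p := by
          rw [div_rpow (by positivity) (by positivity), ← rpow_mul hy.le,
            mul_div_cancel₀ _ hα.ne', rpow_natCast]
  calc ∑' k : ℕ, ((k : ℝ) + 1) ^ α * x ^ k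
      = (∑' k : ℕ, (1 - x) * x ^ k * ((k : ℝ) + 1) ^ α) / (1 - x) := by
        rw [eq_div_iff hy.ne', ← tsum_mul_right]
        exact tsum_congr fun k => by ring
    _ ≤ ((n ! / (1 - x) ^ α) ^ p) ^ p⁻¹ / (1 - x) := by
        gcongr
        exact hjensen.trans (rpow_le_rpow (tsum_nonneg fun k => by positivity) hmoment
          (by positivity))
    _ = n ! / (1 - x) ^ (α + 1) := by
        rw [rpow_rpow_inv (by positivity) (by positivity), rpow_add_one hy.ne', div_div]

end GeometricMoments

theorem rpow_two_mul_le_one_add_sq_rpow {t s : ℝ} (ht : 0 ≤ t) (hs : 0 ≤ s) :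
    t ^ (2 * s) ≤ (1 + t ^ 2) ^ s := by
  rw [rpow_mul ht, rpow_two]
  exact rpow_le_rpow (by positivity) (by linarith) hs

theorem one_add_sq_rpow_le {t s : ℝ} (ht : 1 ≤ t) (hs : 0 ≤ s) :
    (1 + t ^ 2) ^ s ≤ 2 ^ s * t ^ (2 * s) := by
  rw [rpow_mul (by linarith), rpow_two, ← mul_rpow zero_le_two (by positivity)]
  exact rpow_le_rpow (by positivity) (by nlinarith) hs

section SobolevWeight

variable {s x : ℝ}

theorem one_add_sq_rpow_mul_geometric_le (hs : 0 ≤ s) (hx0 : 0 ≤ x) (k : ℕ) :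
    (1 + ((k : ℝ) + 1) ^ 2) ^ s * x ^ k ≤ 2 ^ s * (((k : ℝ) + 1) ^ (2 * s) * x ^ k) := by
  rw [← mul_assoc]
  gcongr
  exact one_add_sq_rpow_le (le_add_of_nonneg_left k.cast_nonneg) hs

theorem one_div_le_tsum_one_add_sq_rpow_mul_geometric (hs : 1 / 2 ≤ s) (hx0 : 0 ≤ x)
    (hx1 : x < 1) :
    1 / (1 - x) ^ (2 * s + 1) ≤ ∑' k : ℕ, (1 + ((k : ℝ) + 1) ^ 2) ^ s * x ^ k := by
  have hs0 : 0 ≤ s := by linarith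
  refine (one_div_one_sub_rpow_le_tsum_add_one_rpow_mul_geometric (by linarith) hx0 hx1).trans
    (Summable.tsum_le_tsum (fun k => ?_) (summable_add_one_rpow_mul_geometric _ hx0 hx1)
      (.of_nonneg_of_le (fun k => by positivity) (one_add_sq_rpow_mul_geometric_le hs0 hx0)
        ((summable_add_one_rpow_mul_geometric _ hx0 hx1).mul_left _)))
  gcongr
  exact rpow_two_mul_le_one_add_sq_rpow (by positivity) hs0

theorem tsum_one_add_sq_rpow_mul_geometric_le (hs : 0 < s) (hx0 : 0 ≤ x) (hx1 : x < 1) :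
    ∑' k : ℕ, (1 + ((k : ℝ) + 1) ^ 2) ^ s * x ^ k
      ≤ 2 ^ s * ⌈2 * s⌉₊ ! / (1 - x) ^ (2 * s + 1) := by
  have hS := summable_add_one_rpow_mul_geometric (2 * s) hx0 hx1
  calc ∑' k : ℕ, (1 + ((k : ℝ) + 1) ^ 2) ^ s * x ^ k
      ≤ ∑' k : ℕ, 2 ^ s * (((k : ℝ) + 1) ^ (2 * s) * x ^ k) :=
        Summable.tsum_le_tsum (one_add_sq_rpow_mul_geometric_le hs.le hx0)
          (.of_nonneg_of_le (fun k => by positivity) (one_add_sq_rpow_mul_geometric_le hs.le hx0)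
            (hS.mul_left _)) (hS.mul_left _)
    _ ≤ 2 ^ s * (⌈2 * s⌉₊ ! / (1 - x) ^ (2 * s + 1)) := by
        rw [tsum_mul_left]
        gcongr
        exact tsum_add_one_rpow_mul_geometric_le (by linarith) (le_ceil _) hx0 hx1
    _ = 2 ^ s * ⌈2 * s⌉₊ ! / (1 - x) ^ (2 * s + 1) := by ring

end SobolevWeight

/-- For `u(z) = b + cz/(1-pz)` with `|p| < 1`, `c ≠ 0`, and `s > 1/2`, there are
constants `A_s, B_s > 0` depending only on `s` such that whenever `|p| ≥ 1/2`,
`A_s |c|²/(1-|p|²)^{2s+1} ≤ ‖u - b‖_{H^s}² ≤ B_s |c|²/(1-|p|²)^{2s+1}`,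
where `‖u - b‖_{H^s}² = ∑_{k ≥ 1} (1+k²)^s |û(k)|² = |c|² ∑_{k ≥ 0} (1+(k+1)²)^s |p|^{2k}`. -/
theorem stmt16 (s : ℝ) (hs : 1 / 2 < s) :
    ∃ A B : ℝ, 0 < A ∧ 0 < B ∧
      ∀ (b c p : ℂ), c ≠ 0 → ‖p‖ < 1 → 1 / 2 ≤ ‖p‖ →
        A * (‖c‖ ^ 2 / (1 - ‖p‖ ^ 2) ^ (2 * s + 1))
            ≤ ∑' k : ℕ, (1 + ((k : ℝ) + 1) ^ 2) ^ s * (‖c‖ ^ 2 * ‖p‖ ^ (2 * k)) ∧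
          ∑' k : ℕ, (1 + ((k : ℝ) + 1) ^ 2) ^ s * (‖c‖ ^ 2 * ‖p‖ ^ (2 * k))
            ≤ B * (‖c‖ ^ 2 / (1 - ‖p‖ ^ 2) ^ (2 * s + 1)) := by
  refine ⟨1, 2 ^ s * ⌈2 * s⌉₊ !, one_pos, by positivity, fun _ c p _ hp _ => ?_⟩
  have hx0 : 0 ≤ ‖p‖ ^ 2 := by positivity
  have hx1 : ‖p‖ ^ 2 < 1 := pow_lt_one₀ (norm_nonneg p) hp two_ne_zero
  have hsum : ∑' k : ℕ, (1 + ((k : ℝ) + 1) ^ 2) ^ s * (‖c‖ ^ 2 * ‖p‖ ^ (2 * k))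
      = ‖c‖ ^ 2 * ∑' k : ℕ, (1 + ((k : ℝ) + 1) ^ 2) ^ s * (‖p‖ ^ 2) ^ k := by
    rw [← tsum_mul_left]
    exact tsum_congr fun k => by rw [pow_mul]; ring
  rw [hsum]
  constructor
  · calc 1 * (‖c‖ ^ 2 / (1 - ‖p‖ ^ 2) ^ (2 * s + 1))
        = ‖c‖ ^ 2 * (1 / (1 - ‖p‖ ^ 2) ^ (2 * s + 1)) := by ring
      _ ≤ _ := by
        gcongr
        exact one_div_le_tsum_one_add_sq_rpow_mul_geometric hs.le hx0 hx1
  · calc _ ≤ ‖c‖ ^ 2 * (2 ^ s * ⌈2 * s⌉₊ ! / (1 - ‖p‖ ^ 2) ^ (2 * s + 1)) := by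
          gcongr
          exact tsum_one_add_sq_rpow_mul_geometric_le (by linarith) hx0 hx1
      _ = 2 ^ s * ⌈2 * s⌉₊ ! * (‖c‖ ^ 2 / (1 - ‖p‖ ^ 2) ^ (2 * s + 1)) := by ring
end
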